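/- arXiv:2004.11540 — 2 statements merged into one kernel-verified Lean document; each statement's English description precedes it below -/
import Mathlib

section
/- Let M ∈ ℝ^(3×3) with SVD M = U Σ Vᵀ, Σ = diag(σ₁, σ₂, σ₃) with σ₁ ≥ σ₂ ≥ σ₃ ≥ 0. Then max over R ∈ SO(3) of Tr(R M) equals σ₁ + σ₂ + det(UV) σ₃, attained at R = V S Uᵀ with S = diag(1, 1, det(U)det(V)). -/
/-!
Since `tr (R M) = tr (W Σ)` with `W = Vᵀ R U`, and `W` ranges over the orthogonal matrices of
determinant `det (U V)`, it suffices to show `tr (W Σ) ≤ σ₀ + σ₁ + det W · σ₂` for orthogonal `W`.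
By Abel summation this follows from `W₀₀ ≤ 1`, `W₀₀ + W₁₁ ≤ 2` and `tr W ≤ 2 + det W`; when
`det W = -1` the last one is the bound `tr ≥ -1` on `SO(3)`, applied to `-W`. Choosing `R` with
`W = S` gives equality.
-/

open Matrix

namespace Matrix

section OrthogonalGroup

variable {n R : Type*} [DecidableEq n] [Fintype n] [CommRing R] {A : Matrix n n R}

theorem transpose_mem_orthogonalGroup (hA : A ∈ orthogonalGroup n R) :
    Aᵀ ∈ orthogonalGroup n R := by
  rw [mem_orthogonalGroup_iff, transpose_transpose, ← mem_orthogonalGroup_iff']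
  exact hA

theorem det_mul_self_of_mem_orthogonalGroup (hA : A ∈ orthogonalGroup n R) :
    A.det * A.det = 1 := by
  simpa only [det_mul, det_transpose, det_one] using
    congrArg det ((mem_orthogonalGroup_iff _ _).mp hA)

theorem diagonal_mem_orthogonalGroup {s : n → R} (hs : ∀ i, s i * s i = 1) :
    diagonal s ∈ orthogonalGroup n R := by
  rw [mem_orthogonalGroup_iff, diagonal_transpose, diagonal_mul_diagonal, ← diagonal_one]
  exact congrArg diagonal (funext hs)

theorem adjugate_eq_transpose_of_mem_specialOrthogonalGroup
    (hA : A ∈ specialOrthogonalGroup n R) : adjugate A = Aᵀ := by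
  obtain ⟨hO, hdet⟩ := mem_specialOrthogonalGroup_iff.mp hA
  calc adjugate A = Aᵀ * A * adjugate A := by
        rw [(mem_orthogonalGroup_iff' _ _).mp hO, one_mul]
    _ = Aᵀ := by rw [mul_assoc, mul_adjugate, hdet, one_smul, mul_one]

theorem mul_diagonal_mul_transpose_mem_specialOrthogonalGroup {U V : Matrix (Fin 3) (Fin 3) R}
    (hU : U ∈ orthogonalGroup (Fin 3) R) (hV : V ∈ orthogonalGroup (Fin 3) R) :
    V * diagonal ![1, 1, U.det * V.det] * Uᵀ ∈ specialOrthogonalGroup (Fin 3) R := by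
  have hd : U.det * V.det * (U.det * V.det) = 1 := by
    rw [mul_mul_mul_comm, det_mul_self_of_mem_orthogonalGroup hU,
      det_mul_self_of_mem_orthogonalGroup hV, one_mul]
  have hS : diagonal ![1, 1, U.det * V.det] ∈ orthogonalGroup (Fin 3) R :=
    diagonal_mem_orthogonalGroup fun i => by fin_cases i <;> simp [hd]
  refine mem_specialOrthogonalGroup_iff.mpr
    ⟨mul_mem (mul_mem hV hS) (transpose_mem_orthogonalGroup hU), ?_⟩
  simp only [det_mul, det_transpose, det_diagonal, Fin.prod_univ_three, cons_val_zero,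
    cons_val_one, cons_val, one_mul]
  linear_combination hd

end OrthogonalGroup

theorem trace_mul_mul_mul_cycle {R : Type*} [CommSemiring R] {l m n p : Type*} [Fintype l]
    [Fintype m] [Fintype n] [Fintype p] (A : Matrix l m R) (B : Matrix m n R)
    (C : Matrix n p R) (D : Matrix p l R) : (A * (B * C * D)).trace = (D * A * B * C).trace := by
  rw [← Matrix.mul_assoc, ← Matrix.mul_assoc, trace_mul_comm]
  simp only [Matrix.mul_assoc]

theorem diag_le_one_of_mem_orthogonalGroup {n : Type*} [DecidableEq n] [Fintype n]
    {A : Matrix n n ℝ} (hA : A ∈ orthogonalGroup n ℝ) (i : n) : A i i ≤ 1 := by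
  have hrow : ∑ j, A i j * A i j = 1 := by
    simpa [mul_apply] using congrFun (congrFun ((mem_orthogonalGroup_iff _ _).mp hA) i) i
  have hii : A i i * A i i ≤ 1 :=
    hrow ▸ Finset.single_le_sum (fun j _ => mul_self_nonneg (A i j)) (Finset.mem_univ i)
  nlinarith

section FinThree

variable {A : Matrix (Fin 3) (Fin 3) ℝ}

/- Geometrically the trace is `1 + 2 cos θ`. Algebraically, `adjugate A = Aᵀ` makes each diagonal
entry a `2 × 2` minor, and with the unit rows this yields a sum-of-squares certificate. -/
theorem neg_one_le_trace_of_mem_specialOrthogonalGroup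
    (hA : A ∈ specialOrthogonalGroup (Fin 3) ℝ) : -1 ≤ A.trace := by
  have hadj := adjugate_eq_transpose_of_mem_specialOrthogonalGroup hA
  have hrows := (mem_orthogonalGroup_iff _ _).mp (mem_specialOrthogonalGroup_iff.mp hA).1
  rw [adjugate_fin_three] at hadj
  have c0 := congrFun (congrFun hadj 0) 0
  have c1 := congrFun (congrFun hadj 1) 1
  have c2 := congrFun (congrFun hadj 2) 2
  have r0 := congrFun (congrFun hrows 0) 0
  have r1 := congrFun (congrFun hrows 1) 1
  have r2 := congrFun (congrFun hrows 2) 2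
  simp only [of_apply, cons_val', cons_val_zero, cons_val_fin_one, transpose_apply,
    cons_val_one, cons_val, mul_apply, Fin.sum_univ_three, one_apply_eq] at c0 c1 c2 r0 r1 r2
  rw [trace_fin_three]
  nlinarith [sq_nonneg (1 + A 0 0 + A 1 1 + A 2 2), sq_nonneg (A 1 2 - A 2 1),
    sq_nonneg (A 0 2 - A 2 0), sq_nonneg (A 0 1 - A 1 0)]

theorem trace_le_two_add_det_of_mem_orthogonalGroup (hA : A ∈ orthogonalGroup (Fin 3) ℝ) :
    A.trace ≤ 2 + A.det := by
  rcases mul_self_eq_one_iff.mp (det_mul_self_of_mem_orthogonalGroup hA) with hdet | hdet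
  · have := diag_le_one_of_mem_orthogonalGroup hA
    rw [trace_fin_three, hdet]
    linarith [this 0, this 1, this 2]
  · have hneg : -A ∈ specialOrthogonalGroup (Fin 3) ℝ := by
      refine mem_specialOrthogonalGroup_iff.mpr ⟨?_, ?_⟩
      · rw [mem_orthogonalGroup_iff, transpose_neg, neg_mul_neg, ← mem_orthogonalGroup_iff]
        exact hA
      · rw [det_neg, hdet]; norm_num
    have := neg_one_le_trace_of_mem_specialOrthogonalGroup hneg
    rw [trace_neg] at this
    linarith

theorem trace_mul_diagonal_le_of_mem_orthogonalGroup (hA : A ∈ orthogonalGroup (Fin 3) ℝ)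
    {σ : Fin 3 → ℝ} (h01 : σ 1 ≤ σ 0) (h12 : σ 2 ≤ σ 1) (h2 : 0 ≤ σ 2) :
    (A * diagonal σ).trace ≤ σ 0 + σ 1 + A.det * σ 2 := by
  have hdiag := diag_le_one_of_mem_orthogonalGroup hA
  have htr := trace_le_two_add_det_of_mem_orthogonalGroup hA
  rw [trace_fin_three] at htr
  simp only [trace_fin_three, mul_diagonal]
  -- Abel summation: the weights `σ 0 - σ 1`, `σ 1 - σ 2`, `σ 2` are nonnegative.
  nlinarith [mul_nonneg (sub_nonneg.mpr h01) (sub_nonneg.mpr (hdiag 0)),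
    mul_nonneg (sub_nonneg.mpr h12) (by linarith [hdiag 0, hdiag 1] : 0 ≤ 2 - A 0 0 - A 1 1),
    mul_nonneg h2 (by linarith : 0 ≤ 2 + A.det - (A 0 0 + A 1 1 + A 2 2))]

end FinThree

end Matrix

theorem so3_trace_maximization_svd
    (M U V : Matrix (Fin 3) (Fin 3) ℝ) (σ : Fin 3 → ℝ)
    (hσ : σ 0 ≥ σ 1) (hσ' : σ 1 ≥ σ 2) (hσ'' : 0 ≤ σ 2)
    (hU : U * Uᵀ = 1) (hV : V * Vᵀ = 1)
    (hM : M = U * Matrix.diagonal σ * Vᵀ)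
    (S : Matrix (Fin 3) (Fin 3) ℝ)
    (hS : S = Matrix.diagonal ![1, 1, U.det * V.det]) :
    IsGreatest {x : ℝ | ∃ R : Matrix (Fin 3) (Fin 3) ℝ,
        R * Rᵀ = 1 ∧ R.det = 1 ∧ x = Matrix.trace (R * M)}
      (σ 0 + σ 1 + (U * V).det * σ 2)
    ∧ Matrix.trace ((V * S * Uᵀ) * M) = σ 0 + σ 1 + (U * V).det * σ 2 := by
  subst hM hS
  rw [← mem_orthogonalGroup_iff] at hU hV
  obtain ⟨hSO, hSdet⟩ := mem_specialOrthogonalGroup_iff.mp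
    (mul_diagonal_mul_transpose_mem_specialOrthogonalGroup hU hV)
  have hattain : (V * diagonal ![1, 1, U.det * V.det] * Uᵀ * (U * diagonal σ * Vᵀ)).trace
      = σ 0 + σ 1 + (U * V).det * σ 2 := by
    rw [mem_orthogonalGroup_iff'] at hU hV
    rw [trace_mul_mul_mul_cycle]
    simp only [← mul_assoc, hV, one_mul]
    rw [mul_assoc _ Uᵀ, hU, mul_one, diagonal_mul_diagonal, trace_diagonal, Fin.sum_univ_three,
      det_mul]
    simp
  refine ⟨⟨⟨_, (mem_orthogonalGroup_iff _ _).mp hSO, hSdet, hattain.symm⟩, ?_⟩, hattain⟩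
  rintro x ⟨R, hR, hRdet, rfl⟩
  rw [← mem_orthogonalGroup_iff] at hR
  have hW := mul_mem (mul_mem (transpose_mem_orthogonalGroup hV) hR) hU
  have hWdet : (Vᵀ * R * U).det = (U * V).det := by
    rw [det_mul, det_mul, det_mul, det_transpose, hRdet]
    ring
  rw [trace_mul_mul_mul_cycle, ← hWdet]
  exact trace_mul_diagonal_le_of_mem_orthogonalGroup hW hσ hσ' hσ''
end

section
/- The map f from the 6D representation to SO(3) is surjective: for every R ∈ SO(3) with columns b₁, b₂, b₃, setting a₁ = b₁ and a₂ = b₂ gives f([a₁ a₂]) = R. In particular f(f⁻¹(R)) = R where f⁻¹(R) takes the first two columns of R. -/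
/-!
The columns of an orthogonal matrix are orthonormal, so Gram–Schmidt leaves the first two
unchanged. For `R` orthogonal with `det R = 1` the adjugate is `R⁻¹ = Rᵀ`, and the last row of
the adjugate of a `3 × 3` matrix is the cross product of its first two columns; hence that cross
product is the third column.
-/

open Matrix

theorem orthonormal_columns_of_transpose_mul_self_eq_one {n : Type*} [Fintype n] [DecidableEq n]
    {A : Matrix n n ℝ} (h : Aᵀ * A = 1) :
    Orthonormal ℝ fun i => WithLp.toLp 2 (Aᵀ i) := by
  rw [orthonormal_iff_ite]
  intro i j
  rw [inner_matrix_col_col, conjTranspose_eq_transpose_of_trivial, h, one_apply]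

theorem Matrix.adjugate_eq_transpose_of_mul_transpose_eq_one {n R : Type*} [Fintype n]
    [DecidableEq n] [CommRing R] {A : Matrix n n R} (hA : A * Aᵀ = 1) (hdet : A.det = 1) :
    adjugate A = Aᵀ := by
  simpa [inv_def, hdet] using inv_eq_right_inv hA

theorem Matrix.cross_transpose_zero_one_eq_adjugate {R : Type*} [CommRing R]
    (A : Matrix (Fin 3) (Fin 3) R) :
    Aᵀ 0 ⨯₃ Aᵀ 1 = adjugate A 2 := by
  ext i
  fin_cases i <;> simp [cross_apply, adjugate_fin_three] <;> ring

theorem Matrix.cross_transpose_zero_one_of_mul_transpose_eq_one {R : Type*} [CommRing R]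
    {A : Matrix (Fin 3) (Fin 3) R} (hA : A * Aᵀ = 1) (hdet : A.det = 1) :
    Aᵀ 0 ⨯₃ Aᵀ 1 = Aᵀ 2 := by
  rw [cross_transpose_zero_one_eq_adjugate, adjugate_eq_transpose_of_mul_transpose_eq_one hA hdet]

theorem sixD_representation_surjective
    (R : Matrix (Fin 3) (Fin 3) ℝ)
    (hR : R * Rᵀ = 1) (hdet : R.det = 1)
    (c : Fin 3 → EuclideanSpace ℝ (Fin 3))
    (hc : ∀ i, c i = fun j => R j i)
    (a₁ a₂ b₁ b₂ b₃ : EuclideanSpace ℝ (Fin 3))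
    (ha₁ : a₁ = c 0) (ha₂ : a₂ = c 1)
    (hb₁ : b₁ = ‖a₁‖⁻¹ • a₁)
    (hb₂ : b₂ = ‖a₂ - (inner (𝕜 := ℝ) b₁ a₂) • b₁‖⁻¹ • (a₂ - (inner (𝕜 := ℝ) b₁ a₂) • b₁))
    (hb₃ : b₃ = crossProduct b₁ b₂) :
    Matrix.of (fun i j => ![b₁, b₂, b₃] j i) = R := by
  obtain rfl : c = fun i => WithLp.toLp 2 (Rᵀ i) := funext fun i => WithLp.ofLp_injective 2 (hc i)
  subst ha₁ ha₂
  have hcols := orthonormal_columns_of_transpose_mul_self_eq_one (mul_eq_one_comm.mp hR)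
  obtain rfl : b₁ = WithLp.toLp 2 (Rᵀ 0) := by simp [hb₁, hcols.1 0]
  obtain rfl : b₂ = WithLp.toLp 2 (Rᵀ 1) := by
    simp [hb₂, hcols.2 (show (0 : Fin 3) ≠ 1 by decide), hcols.1 1]
  obtain rfl : b₃ = WithLp.toLp 2 (Rᵀ 2) :=
    WithLp.ofLp_injective 2 (hb₃.trans (cross_transpose_zero_one_of_mul_transpose_eq_one hR hdet))
  ext i j
  fin_cases j <;> rfl
end
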